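/- Let 0 ≤ t < 1 and let (f_i : S_i × X_i → N_i)_{i≥1} be a sequence of biregular irreducible functions with regularity sets M_i and degrees (d_{S_i}, d_{X_i}) such that |X_i| → ∞, lim_{i→∞} (log|M_i|)/(log|X_i|) = 1 − t, and liminf_{i→∞} [min_{m∈M_i} (−log λ₂(f_i,m))] / (log|X_i|) ≥ t. Then liminf_{i→∞} (log max(d_{S_i}, d_{X_i})) / (log|X_i|) ≥ min{(1−t)/13, t}. Moreover, if M_i = N_i for all sufficiently large i, then liminf_{i→∞} (log max(d_{S_i}, d_{X_i})) / (log|X_i|) ≥ t. -/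

import Mathlib

/-!
For `m ∈ M` the matrix `P_{f,m}` is symmetric and stochastic, so its eigenvalues lie in
`[-1, 1]`, and its trace is `|X| / d_S` (each diagonal entry is `d_X / (d_S d_X)`). Dropping the
top eigenvalue, the remaining `|X| - 1` eigenvalues sum to at least `|X| / d_S - 1`, whence
`λ₂(f,m) ≥ 1 / (2 d_S)` as soon as `2 d_S ≤ |X|`. In every case
`min (-log λ₂(f,m), log |X|) ≤ 1 + log d_S`, and the hypothesis on the spectral gap then forces
`log d_S ≥ (t - o(1)) log |X|`, which is stronger than both claimed bounds.
-/

open MeasureTheory Filter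
open scoped ENNReal

noncomputable section
/-- The second-largest eigenvalue modulus of a real matrix `P` (intended: symmetric with
row sums `1`, so that its characteristic polynomial splits over `ℝ` and the largest
eigenvalue has the all-ones eigenvector): the eigenvalues of `P` with multiplicity are the
roots of its characteristic polynomial; we sort them increasingly, drop (one copy of) the
largest one, and take the maximum modulus of the remaining ones.  For eigenvalues
`μ₁ ≥ μ₂ ≥ ... ≥ μ_n` this is `max (|μ₂|, |μ_n|)`. -/
def secondEVmod {n : Type*} [Fintype n] [DecidableEq n] (P : Matrix n n ℝ) : ℝ :=
  ((P.charpoly.roots.sort (· ≤ ·)).dropLast.map (fun μ => |μ|)).foldr max 0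

/-- The symmetric stochastic matrix `P_{f,m}` associated with `f : S × X → N` and a
message `m`, with `(x,x')` entry `|{s : f(s,x) = f(s,x') = m}| / (d_S · d_X)`. -/
def briMatrix {S X N : Type*} [Fintype S] [DecidableEq N]
    (f : S → X → N) (m : N) (dS dX : ℕ) : Matrix X X ℝ :=
  Matrix.of fun x x' =>
    ((Finset.univ.filter fun s : S => f s x = m ∧ f s x' = m).card : ℝ) / (dS * dX)

/-- `λ₂(f,m)`: the second-largest eigenvalue modulus of the matrix `P_{f,m}`. -/
def lam2 {S X N : Type*} [Fintype S] [Fintype X] [DecidableEq X] [DecidableEq N]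
    (f : S → X → N) (m : N) (dS dX : ℕ) : ℝ :=
  secondEVmod (briMatrix f m dS dX)

/-- `f : S × X → N` is a biregular irreducible function with regularity set `M` and
degrees `(d_S, d_X)` (positive integers): for every `m ∈ M`, every `s` has exactly `d_S`
preimages `x` with `f(s,x) = m`, every `x` has exactly `d_X` preimages `s` with
`f(s,x) = m`, and the matrix `P_{f,m}` has second-largest eigenvalue modulus `< 1`. -/
structure IsBRI {S X N : Type*} [Fintype S] [Fintype X] [DecidableEq X] [DecidableEq N]
    (f : S → X → N) (M : Set N) (dS dX : ℕ) : Prop where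
  dS_pos : 0 < dS
  dX_pos : 0 < dX
  regS : ∀ m ∈ M, ∀ s : S, (Finset.univ.filter fun x : X => f s x = m).card = dS
  regX : ∀ m ∈ M, ∀ x : X, (Finset.univ.filter fun s : S => f s x = m).card = dX
  irred : ∀ m ∈ M, lam2 f m dS dX < 1

namespace Matrix

variable {n : Type*} [Fintype n] [DecidableEq n]

lemma abs_le_one_of_mem_rowStochastic_of_isRoot_charpoly {P : Matrix n n ℝ}
    (hP : P ∈ rowStochastic ℝ n) {μ : ℝ} (hμ : P.charpoly.IsRoot μ) : |μ| ≤ 1 := by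
  rw [← charpoly_toLin', ← Module.End.hasEigenvalue_iff_isRoot_charpoly] at hμ
  obtain ⟨k, hk⟩ := eigenvalue_mem_ball hμ
  have hrow : ∑ j ∈ Finset.univ.erase k, ‖P k j‖ = 1 - P k k := by
    simp_rw [Real.norm_of_nonneg (nonneg_of_mem_rowStochastic hP)]
    rw [Finset.sum_erase_eq_sub (Finset.mem_univ k), sum_row_of_mem_rowStochastic hP k]
  rw [Metric.mem_closedBall, Real.dist_eq, hrow] at hk
  have hkk : 0 ≤ P k k := nonneg_of_mem_rowStochastic hP
  rw [abs_le] at hk ⊢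
  constructor <;> linarith

end Matrix

open Matrix in
lemma trace_sub_one_le_mul_secondEVmod {n : Type*} [Fintype n] [DecidableEq n] [Nonempty n]
    {P : Matrix n n ℝ} (hP : P ∈ rowStochastic ℝ n) (hsplit : P.charpoly.Splits) :
    P.trace - 1 ≤ (Fintype.card n - 1) * secondEVmod P := by
  set L := P.charpoly.roots.sort (· ≤ ·)
  have hL : (L : Multiset ℝ) = P.charpoly.roots := Multiset.sort_eq _ _
  have hlen : L.length = Fintype.card n := by
    rw [← Multiset.coe_card, hL, Polynomial.splits_iff_card_roots.mp hsplit,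
      charpoly_natDegree_eq_dim]
  have hne : L ≠ [] := List.ne_nil_of_length_pos (hlen ▸ Fintype.card_pos)
  have hlast : L.getLast hne ≤ 1 := by
    have hroot : L.getLast hne ∈ P.charpoly.roots := hL ▸ List.getLast_mem hne
    exact (le_abs_self _).trans <| abs_le_one_of_mem_rowStochastic_of_isRoot_charpoly hP
      (Polynomial.isRoot_of_mem_roots hroot)
  have htrace : P.trace = L.dropLast.sum + L.getLast hne := by
    rw [trace_eq_sum_roots_charpoly_of_splits hsplit, ← hL, Multiset.sum_coe,
      ← List.sum_singleton (x := L.getLast hne), ← List.sum_append,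
      List.dropLast_append_getLast]
  have hdrop : L.dropLast.sum ≤ L.dropLast.length • secondEVmod P :=
    List.sum_le_card_nsmul _ _ fun μ hμ =>
      (le_abs_self μ).trans (List.le_max_of_le' 0 (List.mem_map_of_mem hμ) le_rfl)
  rw [List.length_dropLast, hlen, nsmul_eq_mul, Nat.cast_pred Fintype.card_pos] at hdrop
  linarith

section BRI

variable {S X N : Type*} [Fintype S] [DecidableEq N] {f : S → X → N} {m : N} {dS dX : ℕ}

lemma briMatrix_isHermitian : (briMatrix f m dS dX).IsHermitian :=
  Matrix.IsHermitian.ext fun x x' => by simp [briMatrix, and_comm]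

variable [Fintype X] [DecidableEq X] {M : Set N}

lemma IsBRI.sum_card_filter_and (h : IsBRI f M dS dX) (hm : m ∈ M) (x : X) :
    ∑ x' : X, (Finset.univ.filter fun s : S => f s x = m ∧ f s x' = m).card = dX * dS := by
  simp_rw [Finset.card_filter, ite_and]
  rw [Finset.sum_comm]
  simp_rw [Finset.sum_ite_irrel, Finset.sum_const_zero, ← Finset.card_filter, h.regS m hm,
    ← Finset.sum_filter, Finset.sum_const, h.regX m hm, smul_eq_mul]

lemma IsBRI.briMatrix_mem_rowStochastic (h : IsBRI f M dS dX) (hm : m ∈ M) :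
    briMatrix f m dS dX ∈ Matrix.rowStochastic ℝ X := by
  have hdS : (dS : ℝ) ≠ 0 := by exact_mod_cast h.dS_pos.ne'
  have hdX : (dX : ℝ) ≠ 0 := by exact_mod_cast h.dX_pos.ne'
  refine Matrix.mem_rowStochastic_iff_sum.mpr ⟨fun x x' => ?_, fun x => ?_⟩
  · simp only [briMatrix, Matrix.of_apply]
    positivity
  · simp only [briMatrix, Matrix.of_apply]
    rw [← Finset.sum_div, ← Nat.cast_sum, h.sum_card_filter_and hm x]
    field_simp
    push_cast
    ring

lemma IsBRI.trace_briMatrix (h : IsBRI f M dS dX) (hm : m ∈ M) :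
    (briMatrix f m dS dX).trace = Fintype.card X / dS := by
  have hdX : (dX : ℝ) ≠ 0 := by exact_mod_cast h.dX_pos.ne'
  simp [Matrix.trace, briMatrix, h.regX m hm]
  field_simp

lemma IsBRI.inv_two_mul_le_lam2 (h : IsBRI f M dS dX) (hm : m ∈ M)
    (hX : 2 * dS ≤ Fintype.card X) : (2 * dS : ℝ)⁻¹ ≤ lam2 f m dS dX := by
  have hd : (1 : ℝ) ≤ dS := by exact_mod_cast h.dS_pos
  have hn : (2 * dS : ℝ) ≤ Fintype.card X := by exact_mod_cast hX
  have : Nonempty X := Fintype.card_pos_iff.mp (by linarith [h.dS_pos])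
  have htrace := trace_sub_one_le_mul_secondEVmod (h.briMatrix_mem_rowStochastic hm)
    briMatrix_isHermitian.splits_charpoly
  rw [h.trace_briMatrix hm] at htrace
  refine le_of_mul_le_mul_right (a := (Fintype.card X - 1 : ℝ)) ?_ (by linarith)
  calc (2 * dS : ℝ)⁻¹ * (Fintype.card X - 1) ≤ Fintype.card X / dS - 1 := by
        field_simp
        linarith
    _ ≤ _ := by rw [mul_comm]; exact htrace

lemma IsBRI.min_neg_logb_lam2_le (h : IsBRI f M dS dX) (hm : m ∈ M) :
    min (-Real.logb 2 (lam2 f m dS dX)) (Real.logb 2 (Fintype.card X)) ≤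
      1 + Real.logb 2 dS := by
  have hd : (1 : ℝ) ≤ dS := by exact_mod_cast h.dS_pos
  rw [← Real.logb_self_eq_one one_lt_two, ← Real.logb_mul two_ne_zero (by positivity)]
  by_cases hX : 2 * dS ≤ Fintype.card X
  · refine min_le_of_left_le ?_
    rw [neg_le, ← Real.logb_inv]
    exact Real.logb_le_logb_of_le one_lt_two (by positivity) (h.inv_two_mul_le_lam2 hm hX)
  · refine min_le_of_right_le ?_
    rcases (Fintype.card X).eq_zero_or_pos with h0 | hpos
    · rw [h0, Nat.cast_zero, Real.logb_zero]
      exact Real.logb_nonneg one_lt_two (by linarith)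
    · exact Real.logb_le_logb_of_le one_lt_two (by positivity)
        (by exact_mod_cast (not_le.mp hX).le)

lemma IsBRI.sub_one_le_logb_max_of_le_sInf [Finite N] (h : IsBRI f M dS dX)
    (hM : M.Nonempty) {a : ℝ} (ha : a ≤ 1)
    (hlam : a * Real.logb 2 (Fintype.card X) ≤
      sInf ((fun m => -Real.logb 2 (lam2 f m dS dX)) '' M)) :
    a * Real.logb 2 (Fintype.card X) - 1 ≤ Real.logb 2 (max dS dX) := by
  obtain ⟨m, hm⟩ := hM
  have hsInf : sInf ((fun m => -Real.logb 2 (lam2 f m dS dX)) '' M) ≤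
      -Real.logb 2 (lam2 f m dS dX) :=
    csInf_le (M.toFinite.image _).bddBelow ⟨m, hm, rfl⟩
  have hL : 0 ≤ Real.logb 2 (Fintype.card X) :=
    div_nonneg (Real.log_natCast_nonneg _) (Real.log_nonneg one_le_two)
  have hmin : a * Real.logb 2 (Fintype.card X) ≤
      min (-Real.logb 2 (lam2 f m dS dX)) (Real.logb 2 (Fintype.card X)) :=
    le_min (hlam.trans hsInf) (mul_le_of_le_one_left hL ha)
  have hmax : Real.logb 2 dS ≤ Real.logb 2 (max dS dX) :=
    Real.logb_le_logb_of_le one_lt_two (by exact_mod_cast h.dS_pos)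
      (by exact_mod_cast le_max_left _ _)
  linarith [h.min_neg_logb_lam2_le hm]

end BRI

theorem stmt_18_general (t : ℝ) (ht1 : t < 1)
    (sS sX sN : ℕ → ℕ) (f : ∀ i, Fin (sS i) → Fin (sX i) → Fin (sN i))
    (M : ∀ i, Set (Fin (sN i))) (dS dX : ℕ → ℕ)
    (hBRI : ∀ i, IsBRI (f i) (M i) (dS i) (dX i))
    (hX : Tendsto (fun i => (sX i : ℝ)) atTop atTop)
    (hrate : Tendsto (fun i => Real.logb 2 (Nat.card (M i)) / Real.logb 2 (sX i)) atTop
      (nhds (1 - t)))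
    (hEV : ∀ ε > 0, ∀ᶠ i in atTop,
      t - ε ≤ sInf ((fun m => -Real.logb 2 (lam2 (f i) m (dS i) (dX i))) '' (M i)) /
        Real.logb 2 (sX i)) :
    (∀ ε > 0, ∀ᶠ i in atTop,
      min ((1 - t) / 13) t - ε
        ≤ Real.logb 2 (max (dS i) (dX i)) / Real.logb 2 (sX i)) ∧
    ((∀ᶠ i in atTop, M i = Set.univ) →
      ∀ ε > 0, ∀ᶠ i in atTop,
        t - ε ≤ Real.logb 2 (max (dS i) (dX i)) / Real.logb 2 (sX i)) := by
  have hlog : Tendsto (fun i => Real.logb 2 (sX i)) atTop atTop :=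
    (Real.tendsto_logb_atTop one_lt_two).comp hX
  have hM : ∀ᶠ i in atTop, (M i).Nonempty := by
    filter_upwards [hrate.eventually (eventually_gt_nhds (sub_pos.mpr ht1))] with i hi
    refine Set.nonempty_iff_ne_empty.mpr fun hempty => ?_
    simp [hempty] at hi
  have hdeg : ∀ ε > 0, ∀ᶠ i in atTop,
      t - ε ≤ Real.logb 2 (max (dS i) (dX i)) / Real.logb 2 (sX i) := by
    intro ε hε
    filter_upwards [hlog.eventually_ge_atTop (2 / ε), hEV (ε / 2) (by positivity), hM]
      with i hL hlam hMi
    have hLpos : 0 < Real.logb 2 (sX i) := lt_of_lt_of_le (by positivity) hL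
    rw [le_div_iff₀ hLpos] at hlam ⊢
    rw [div_le_iff₀' hε] at hL
    have hi := (hBRI i).sub_one_le_logb_max_of_le_sInf hMi (a := t - ε / 2) (by linarith)
      (by rwa [Fintype.card_fin])
    rw [Fintype.card_fin] at hi
    linarith
  refine ⟨fun ε hε => (hdeg ε hε).mono fun i hi => le_trans ?_ hi, fun _ => hdeg⟩
  linarith [min_le_right ((1 - t) / 13) t]

/-- **Lemma 8 of the paper.** Under the optimality hypotheses on the
sequence of biregular irreducible functions (`|X_i| → ∞`, `log|M_i|/log|X_i| → 1 − t`,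
`liminf (min_{m}(−log λ₂(f_i,m)))/log|X_i| ≥ t`), the maximum degree satisfies
`liminf_i log(max(d_{S_i}, d_{X_i}))/log|X_i| ≥ min{(1−t)/13, t}` (liminf bounds stated
in their `∀ ε > 0`-eventual form); and if moreover `M_i = N_i` for all large `i`, then
`liminf_i log(max(d_{S_i}, d_{X_i}))/log|X_i| ≥ t`. -/
theorem stmt_18 (t : ℝ) (ht0 : 0 ≤ t) (ht1 : t < 1)
    (sS sX sN : ℕ → ℕ) (f : ∀ i, Fin (sS i) → Fin (sX i) → Fin (sN i))
    (M : ∀ i, Set (Fin (sN i))) (dS dX : ℕ → ℕ)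
    (hBRI : ∀ i, IsBRI (f i) (M i) (dS i) (dX i))
    (hX : Tendsto (fun i => (sX i : ℝ)) atTop atTop)
    (hrate : Tendsto (fun i => Real.logb 2 (Nat.card (M i)) / Real.logb 2 (sX i)) atTop
      (nhds (1 - t)))
    (hEV : ∀ ε > 0, ∀ᶠ i in atTop,
      t - ε ≤ sInf ((fun m => -Real.logb 2 (lam2 (f i) m (dS i) (dX i))) '' (M i)) /
        Real.logb 2 (sX i)) :
    (∀ ε > 0, ∀ᶠ i in atTop,
      min ((1 - t) / 13) t - ε
        ≤ Real.logb 2 (max (dS i) (dX i)) / Real.logb 2 (sX i)) ∧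
    ((∀ᶠ i in atTop, M i = Set.univ) →
      ∀ ε > 0, ∀ᶠ i in atTop,
        t - ε ≤ Real.logb 2 (max (dS i) (dX i)) / Real.logb 2 (sX i)) :=
  stmt_18_general t ht1 sS sX sN f M dS dX hBRI hX hrate hEV
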